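/- Let E⁺, E⁻, E_em, E_ov be real numbers satisfying E⁺ < E_em < E⁻ and E_em < E⁺ + E_ov. Then for all natural numbers n, m, k with 1 ≤ m ≤ n and 0 ≤ k < n, we have m·E⁺ + (n−m)·E_em < k·E⁺ + max(k−m,0)·E_ov + (n−k)·E⁻. -/

import Mathlib

/-!
Compared with the ideal configuration, a configuration detecting `k` objects pays
`E⁻ - E_em > 0` for each of its `n - k ≥ 1` negative masks, `E_em - E⁺ ≥ 0` for each of the
`m - k` missed objects if `k ≤ m`, and `E⁺ + E_ov - E_em ≥ 0` for each of the `k - m`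
overlapping detections if `m ≤ k`. The difference of energies is exactly the sum of these costs.
-/

variable {α : Type*} [CommRing α] [LinearOrder α] [IsStrictOrderedRing α]

def idealEnergy (Ep Eem n m : α) : α :=
  m * Ep + (n - m) * Eem

def configEnergy (Ep En Eov n m k : α) : α :=
  k * Ep + max (k - m) 0 * Eov + (n - k) * En

theorem configEnergy_sub_idealEnergy (Ep En Eem Eov n m k : α) :
    configEnergy Ep En Eov n m k - idealEnergy Ep Eem n m =
      (n - k) * (En - Eem) + max (k - m) 0 * (Ep + Eov - Eem) + max (m - k) 0 * (Eem - Ep) := by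
  unfold configEnergy idealEnergy
  rcases le_total k m with hkm | hmk
  · rw [max_eq_right (sub_nonpos.2 hkm), max_eq_left (sub_nonneg.2 hkm)]
    ring
  · rw [max_eq_left (sub_nonneg.2 hmk), max_eq_right (sub_nonpos.2 hmk)]
    ring

theorem idealEnergy_lt_configEnergy {Ep En Eem Eov n m k : α} (hpos : Ep ≤ Eem)
    (hneg : Eem < En) (hov : Eem ≤ Ep + Eov) (hkn : k < n) :
    idealEnergy Ep Eem n m < configEnergy Ep En Eov n m k := by
  rw [← sub_pos, configEnergy_sub_idealEnergy]
  have hneg_cost : 0 < (n - k) * (En - Eem) := mul_pos (sub_pos.2 hkn) (sub_pos.2 hneg)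
  have hov_cost : 0 ≤ max (k - m) 0 * (Ep + Eov - Eem) :=
    mul_nonneg (le_max_right _ _) (sub_nonneg.2 hov)
  have hmiss_cost : 0 ≤ max (m - k) 0 * (Eem - Ep) :=
    mul_nonneg (le_max_right _ _) (sub_nonneg.2 hpos)
  linarith

theorem stmt_5 (Ep En Eem Eov : ℝ) (h1 : Ep < Eem) (h2 : Eem < En) (h3 : Eem < Ep + Eov) :
    ∀ n m k : ℕ, 1 ≤ m → m ≤ n → k < n →
      (m : ℝ) * Ep + ((n : ℝ) - (m : ℝ)) * Eem <
        (k : ℝ) * Ep + max ((k : ℝ) - (m : ℝ)) 0 * Eov + ((n : ℝ) - (k : ℝ)) * En := by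
  intro n m k _ _ hkn
  exact idealEnergy_lt_configEnergy h1.le h2 h3.le (Nat.cast_lt.2 hkn)
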